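/- arXiv:2510.26975 — 4 statements merged into one kernel-verified Lean document; each statement's English description precedes it below -/
import Mathlib

section
/- Let (G, T) be a graft and let F be a join of (G, T). Then F is a minimum join (a join of minimum cardinality) if and only if w_F(C) ≥ 0 holds for every circuit C of G. -/
open SimpleGraph
open scoped Classical

variable {V : Type*} [Fintype V] [DecidableEq V]

/-- `(G, T)` is a graft: every connected component of `G` contains an even number
of vertices of `T`. -/
def IsGraft (G : SimpleGraph V) (T : Set V) : Prop :=
  ∀ v : V, Even {u ∈ T | G.Reachable v u}.ncard

/-- `F` is a join of `(G, T)`: `F ⊆ E(G)` and every vertex `v` is incident to an odd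
number of edges of `F` exactly when `v ∈ T`. -/
def IsJoin (G : SimpleGraph V) (T : Set V) (F : Set (Sym2 V)) : Prop :=
  F ⊆ G.edgeSet ∧ ∀ v : V, (Odd {e ∈ F | v ∈ e}.ncard ↔ v ∈ T)

/-- `F` is a minimum join of `(G, T)`. -/
def IsMinJoin (G : SimpleGraph V) (T : Set V) (F : Set (Sym2 V)) : Prop :=
  IsJoin G T F ∧ ∀ F' : Set (Sym2 V), IsJoin G T F' → F.ncard ≤ F'.ncard

/-- `F`-weight of an edge: `-1` if the edge is in `F`, `+1` otherwise. -/
noncomputable def ew (F : Set (Sym2 V)) (e : Sym2 V) : ℤ :=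
  if e ∈ F then -1 else 1

/-- `F`-weight of a walk: the sum of the `F`-weights of its edges. -/
noncomputable def walkWeight {G : SimpleGraph V} {x y : V} (F : Set (Sym2 V))
    (p : G.Walk x y) : ℤ :=
  (p.edges.map (ew F)).sum

/-- `F`-distance between `x` and `y`: the minimum `F`-weight of a path between them. -/
noncomputable def distF (G : SimpleGraph V) (F : Set (Sym2 V)) (x y : V) : ℤ :=
  sInf {w : ℤ | ∃ p : G.Walk x y, p.IsPath ∧ walkWeight F p = w}

/-- `F` covers the vertex `v`. -/
def Covers (F : Set (Sym2 V)) (v : V) : Prop := ∃ e ∈ F, v ∈ e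

/-- The edge set `F` is nonempty and determines a connected subgraph. -/
def ConnectedEdgeSet (F : Set (Sym2 V)) : Prop :=
  F.Nonempty ∧ ∀ x y : V, Covers F x → Covers F y →
    (SimpleGraph.fromEdgeSet F).Reachable x y

/-- `e` has exactly one endpoint in `K`. -/
def Crossing (K : Set V) (e : Sym2 V) : Prop :=
  ∃ x y : V, e = s(x, y) ∧ x ∈ K ∧ y ∉ K

/-- The subgraph of `G` induced on `S` (viewed as a graph on the same vertex type). -/
def sgRestrict (G : SimpleGraph V) (S : Set V) : SimpleGraph V where
  Adj x y := G.Adj x y ∧ x ∈ S ∧ y ∈ S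
  symm := ⟨fun x y h => ⟨h.1.symm, h.2.2, h.2.1⟩⟩
  loopless := ⟨fun x h => G.loopless.irrefl x h.1⟩

/-- The subgraph of `G` induced on `S`, with all edges having both endpoints in `L` deleted. -/
def sgRestrictDel (G : SimpleGraph V) (S L : Set V) : SimpleGraph V where
  Adj x y := G.Adj x y ∧ x ∈ S ∧ y ∈ S ∧ ¬(x ∈ L ∧ y ∈ L)
  symm := ⟨fun x y h => ⟨h.1.symm, h.2.2.1, h.2.1, fun hc => h.2.2.2 ⟨hc.2, hc.1⟩⟩⟩
  loopless := ⟨fun x h => G.loopless.irrefl x h.1⟩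

/-- `K` is (the vertex set of) a connected component of the subgraph of `G` induced on `S`. -/
def IsCompOn (G : SimpleGraph V) (S K : Set V) : Prop :=
  ∃ v ∈ S, K = {u | (sgRestrict G S).Reachable v u}

/-!
The symmetric difference of two `T`-joins is an `∅`-join, i.e. an edge set in which every vertex
has even degree; conversely `F ∆ D` is a `T`-join for every `∅`-join `D`, and
`|F ∆ D| = |F| + w_F(D)`. So `F` is a minimum join iff every `∅`-join has nonnegative
`F`-weight.
A circuit is an `∅`-join, and every nonempty `∅`-join contains a circuit, since a forest with an
edge has a leaf, which has odd degree. Peeling off circuits one at a time reduces the condition on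
`∅`-joins to the condition on circuits.
-/

open scoped symmDiff

theorem Finset.even_card_symmDiff_iff {α : Type*} [DecidableEq α] (s t : Finset α) :
    Even (s ∆ t).card ↔ (Even s.card ↔ Even t.card) := by
  have hs := card_sdiff_add_card_inter s t
  have ht := card_sdiff_add_card_inter t s
  rw [inter_comm] at ht
  rw [symmDiff_def, sup_eq_union, card_union_of_disjoint disjoint_sdiff_sdiff, ← hs, ← ht]
  simp only [Nat.even_add]
  tauto

theorem Set.even_ncard_symmDiff_iff {α : Type*} {s t : Set α} (hs : s.Finite) (ht : t.Finite) :
    Even (s ∆ t).ncard ↔ (Even s.ncard ↔ Even t.ncard) := by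
  lift s to Finset α using hs
  lift t to Finset α using ht
  rw [← Finset.coe_symmDiff, ncard_coe_finset, ncard_coe_finset, ncard_coe_finset]
  exact Finset.even_card_symmDiff_iff s t

namespace SimpleGraph

variable {V : Type*}

theorem exists_isCycle_of_forall_even_degree {H : SimpleGraph V} [Finite H.edgeSet]
    [H.LocallyFinite] (heven : ∀ v, Even (H.degree v)) (hH : H ≠ ⊥) :
    ∃ (v : V) (c : H.Walk v v), c.IsCycle := by
  by_contra! hcyc
  have hacyc : H.IsAcyclic := fun _ c => hcyc _ c
  obtain ⟨a, b, hab⟩ := ne_bot_iff_exists_adj.mp hH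
  have : Nonempty V := ⟨a⟩
  obtain ⟨u, v, p, hp, hmax⟩ := Walk.exists_isPath_forall_isPath_length_le_length H
  have hnil : ¬p.Nil := fun hnil => by
    have := hmax a b hab.toWalk (by simp [hab.ne])
    simp [hnil.length_eq_zero] at this
  -- In a forest, the first vertex of a longest path is a leaf.
  have hdeg : H.degree u = 1 := by
    rw [degree_eq_one_iff_existsUnique_adj]
    refine ⟨_, p.adj_snd hnil, fun w hw => hacyc.eq_snd_of_adj_start hp hw ?_⟩
    by_contra hws
    have := hmax _ _ (p.cons hw.symm) (hp.cons hws)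
    simp at this
  simpa [hdeg] using heven u

end SimpleGraph

section Joins

variable {V : Type*} {G : SimpleGraph V}

theorem IsJoin.symmDiff [Finite V] {T T' : Set V} {F F' : Set (Sym2 V)}
    (hF : IsJoin G T F) (hF' : IsJoin G T' F') : IsJoin G (T ∆ T') (F ∆ F') := by
  refine ⟨symmDiff_le_sup.trans (sup_le hF.1 hF'.1), fun v => ?_⟩
  have hsep : {e ∈ F ∆ F' | v ∈ e} = {e ∈ F | v ∈ e} ∆ {e ∈ F' | v ∈ e} := by
    ext e
    simp only [Set.mem_ofPred_eq, Set.mem_symmDiff]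
    tauto
  rw [hsep, ← Nat.not_even_iff_odd, Set.even_ncard_symmDiff_iff (Set.toFinite _) (Set.toFinite _),
    Set.mem_symmDiff, ← hF.2 v, ← hF'.2 v, ← Nat.not_even_iff_odd, ← Nat.not_even_iff_odd]
  tauto

theorem SimpleGraph.Walk.IsTrail.isJoin_empty [DecidableEq V] {u : V} {p : G.Walk u u}
    (hp : p.IsTrail) :
    IsJoin G ∅ (p.edges.toFinset : Set (Sym2 V)) := by
  refine ⟨fun e he => p.edges_subset_edgeSet (List.mem_toFinset.mp he), fun v => ?_⟩
  have hsep : {e ∈ (p.edges.toFinset : Set (Sym2 V)) | v ∈ e}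
      = ↑(p.edges.filter (v ∈ ·)).toFinset := by
    ext e
    simp
  rw [hsep, Set.ncard_coe_finset,
    List.toFinset_card_of_nodup (hp.edges_nodup.filter _), ← List.countP_eq_length_filter,
    ← Nat.not_even_iff_odd, hp.even_countP_edges_iff]
  simp

theorem exists_isCycle_subset_of_isJoin_empty [Fintype V] {D : Set (Sym2 V)}
    (hD : IsJoin G ∅ D) (hne : D.Nonempty) :
    ∃ (v : V) (c : G.Walk v v), c.IsCycle ∧ ∀ e ∈ c.edges, e ∈ D := by
  have hH : (fromEdgeSet D).edgeSet = D := by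
    ext e
    simp only [edgeSet_fromEdgeSet, Set.mem_sdiff]
    exact ⟨And.left, fun he => ⟨he, G.not_isDiag_of_mem_edgeSet (hD.1 he)⟩⟩
  have hdeg (v : V) : (fromEdgeSet D).degree v = {e ∈ D | v ∈ e}.ncard := by
    rw [← card_incidenceSet_eq_degree, Fintype.card_eq_nat_card, Nat.card_coe_set_eq,
      incidenceSet, hH]
  obtain ⟨v, c, hc⟩ := exists_isCycle_of_forall_even_degree
    (fun v => by rw [hdeg, ← Nat.not_odd_iff_even, hD.2 v]; exact Set.notMem_empty v)
    (edgeSet_nonempty.mp (hH ▸ hne))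
  have hcD : ∀ e ∈ c.edges, e ∈ D := fun e he => hH ▸ c.edges_subset_edgeSet he
  exact ⟨v, c.transfer G fun e he => hD.1 (hcD e he), hc.transfer _,
    fun e he => hcD e (by rwa [Walk.edges_transfer] at he)⟩

end Joins

section Weights

variable {V : Type*} [Fintype V] {G : SimpleGraph V}

theorem sum_ew_eq_ncard_sdiff_sub_ncard_inter (F D : Set (Sym2 V)) :
    ∑ e ∈ D.toFinset, ew F e = ((D \ F).ncard : ℤ) - (D ∩ F).ncard := by
  have hin : (D.toFinset.filter (· ∈ F)).card = (D ∩ F).ncard := by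
    rw [Set.ncard_eq_toFinset_card']
    congr 1
    ext
    simp
  have hout : (D.toFinset.filter (· ∉ F)).card = (D \ F).ncard := by
    rw [Set.ncard_eq_toFinset_card']
    congr 1
    ext
    simp
  simp only [ew, Finset.sum_ite, Finset.sum_const, hin, hout, nsmul_eq_mul]
  ring

theorem ncard_symmDiff_eq_ncard_add_sum_ew (F D : Set (Sym2 V)) :
    ((F ∆ D).ncard : ℤ) = F.ncard + ∑ e ∈ D.toFinset, ew F e := by
  have hsymm : (F ∆ D).ncard = (F \ D).ncard + (D \ F).ncard :=
    Set.symmDiff_def F D ▸ Set.ncard_union_eq disjoint_sdiff_sdiff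
  have hF := Set.ncard_inter_add_ncard_sdiff_eq_ncard F D
  rw [sum_ew_eq_ncard_sdiff_sub_ncard_inter, hsymm, ← hF, Set.inter_comm]
  push_cast
  ring

theorem sum_nonneg_of_isJoin_empty {M : Type*} [AddCommMonoid M] [PartialOrder M]
    [IsOrderedAddMonoid M] {w : Sym2 V → M}
    (hcyc : ∀ (v : V) (c : G.Walk v v), c.IsCycle → 0 ≤ (c.edges.map w).sum)
    {D : Set (Sym2 V)} (hD : IsJoin G ∅ D) : 0 ≤ ∑ e ∈ D.toFinset, w e := by
  induction hn : D.ncard using Nat.strong_induction_on generalizing D with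
  | _ n ih =>
  obtain rfl | hne := D.eq_empty_or_nonempty
  · simp
  obtain ⟨v, c, hc, hcD⟩ := exists_isCycle_subset_of_isJoin_empty hD hne
  set C : Set (Sym2 V) := ↑c.edges.toFinset
  have hCD : C ⊆ D := fun e he => hcD e (List.mem_toFinset.mp he)
  have hC : C.Nonempty := by
    obtain ⟨e, he⟩ := List.exists_mem_of_ne_nil _ (Walk.edges_eq_nil.not.mpr hc.not_nil)
    exact ⟨e, List.mem_toFinset.mpr he⟩
  have hDC : IsJoin G ∅ (D \ C) := by
    have := hD.symmDiff hc.isTrail.isJoin_empty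
    rwa [symmDiff_self, Set.bot_eq_empty, symmDiff_of_ge hCD] at this
  have hlt : (D \ C).ncard < n := by
    rw [Set.ncard_sdiff hCD, ← hn]
    have := hC.ncard_pos
    have := Set.ncard_le_ncard hCD
    omega
  have hsplit :
      ∑ e ∈ D.toFinset, w e = ∑ e ∈ (D \ C).toFinset, w e + ∑ e ∈ C.toFinset, w e := by
    rw [Set.toFinset_sdiff, Finset.sum_sdiff (Set.toFinset_mono hCD)]
  have hCw : ∑ e ∈ C.toFinset, w e = (c.edges.map w).sum := by
    rw [Finset.toFinset_coe, List.sum_toFinset _ hc.edges_nodup]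
  rw [hsplit, hCw]
  -- `convert` reconciles the two `Fintype` instances on `D \ C` behind `toFinset`.
  exact add_nonneg (by convert ih _ hlt hDC rfl) (hcyc v c hc)

end Weights

theorem stmt_1_general (G : SimpleGraph V) (T : Set V) (F : Set (Sym2 V))
    (hF : IsJoin G T F) :
    IsMinJoin G T F ↔ ∀ (v : V) (c : G.Walk v v), c.IsCycle → 0 ≤ walkWeight F c := by
  refine ⟨fun hmin v c hc => ?_, fun hcyc => ⟨hF, fun F' hF' => ?_⟩⟩
  · have hFC := hF.symmDiff hc.isTrail.isJoin_empty
    rw [← Set.bot_eq_empty, symmDiff_bot] at hFC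
    have hcard := ncard_symmDiff_eq_ncard_add_sum_ew F c.edges.toFinset
    rw [Finset.toFinset_coe, List.sum_toFinset (ew F) hc.edges_nodup] at hcard
    have hle := hmin.2 _ hFC
    rw [walkWeight]
    omega
  · have hD := hF.symmDiff hF'
    rw [symmDiff_self, Set.bot_eq_empty] at hD
    have hcard := ncard_symmDiff_eq_ncard_add_sum_ew F (F ∆ F')
    rw [symmDiff_symmDiff_cancel_left] at hcard
    have hnonneg := sum_nonneg_of_isJoin_empty hcyc hD
    omega

/-- a join `F` of a graft `(G, T)` is a minimum join iff every
circuit of `G` has nonnegative `F`-weight. -/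
theorem stmt_1 (G : SimpleGraph V) (T : Set V) (F : Set (Sym2 V))
    (hG : IsGraft G T) (hF : IsJoin G T F) :
    IsMinJoin G T F ↔ ∀ (v : V) (c : G.Walk v v), c.IsCycle → 0 ≤ walkWeight F c :=
  stmt_1_general G T F hF
end

section
/- Let (G, T) be a graft, let x, y ∈ V(G) lie in the same connected component of G, and let F₁ and F₂ be two minimum joins of (G, T). Then dist_{F₁}(x, y) = dist_{F₂}(x, y); that is, the F-distance between x and y does not depend on the choice of the minimum join F. -/
/-!
For a minimum join `F` and an edge set `C` in which every vertex has even degree, `F ∆ C` is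
again a join, and `|F ∆ C| - |F|` is the `F`-weight of `C`; so such `C` have nonnegative
`F`-weight. Take a path `P` from `x` to `y` of minimum `F₂`-weight. The edge set
`B = P ∆ F₁ ∆ F₂` has exactly `x` and `y` as odd-degree vertices, and as `|F₁| = |F₂|`, its
`F₁`-weight equals the `F₂`-weight of `P`. `B` contains an `x`–`y` path `Q` whose complement in
`B` has only even degrees, so `dist_{F₁}(x, y) ≤ w_{F₁}(Q) ≤ w_{F₁}(B) = dist_{F₂}(x, y)`, and
symmetry gives equality.
-/

open SimpleGraph
open scoped Classical

variable {V : Type*} [Fintype V] [DecidableEq V]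

open Finset
open scoped symmDiff

namespace Finset

lemma card_symmDiff_add_two_mul_card_inter {α : Type*} [DecidableEq α] (s t : Finset α) :
    #(s ∆ t) + 2 * #(s ∩ t) = #s + #t := by
  rw [Finset.symmDiff_def, card_union_of_disjoint disjoint_sdiff_sdiff]
  have := card_sdiff_add_card_inter s t
  have := card_sdiff_add_card_inter t s
  rw [inter_comm t s] at this
  omega

lemma filter_symmDiff {α : Type*} [DecidableEq α] (p : α → Prop) [DecidablePred p]
    (s t : Finset α) : (s ∆ t).filter p = s.filter p ∆ t.filter p := by
  ext a
  simp only [mem_filter, mem_symmDiff]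
  tauto

end Finset

def oddVerts (C : Finset (Sym2 V)) : Finset V :=
  univ.filter fun v => Odd #(C.filter (v ∈ ·))

lemma mem_oddVerts {C : Finset (Sym2 V)} {v : V} :
    v ∈ oddVerts C ↔ Odd #(C.filter (v ∈ ·)) := by
  simp [oddVerts]

lemma oddVerts_symmDiff (C D : Finset (Sym2 V)) :
    oddVerts (C ∆ D) = oddVerts C ∆ oddVerts D := by
  ext v
  have h := card_symmDiff_add_two_mul_card_inter (C.filter (v ∈ ·)) (D.filter (v ∈ ·))
  rw [← filter_symmDiff] at h
  simp only [mem_symmDiff, mem_oddVerts, ← Nat.not_even_iff_odd, Nat.even_iff]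
  omega

lemma degree_fromEdgeSet_eq_card_filter {C : Finset (Sym2 V)} (hC : ∀ e ∈ C, ¬e.IsDiag)
    (v : V) : (fromEdgeSet (C : Set (Sym2 V))).degree v = #(C.filter (v ∈ ·)) := by
  rw [← card_incidenceFinset_eq_degree]
  congr 1
  ext e
  simp only [mem_incidenceFinset, incidenceSet, edgeSet_fromEdgeSet, Set.mem_ofPred_eq,
    Set.mem_sdiff, Finset.mem_coe, Sym2.mem_diagSet, mem_filter]
  exact ⟨fun h => ⟨h.1.1, h.2⟩, fun h => ⟨⟨h.1, hC e h.1⟩, h.2⟩⟩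

lemma even_card_oddVerts {C : Finset (Sym2 V)} (hC : ∀ e ∈ C, ¬e.IsDiag) :
    Even #(oddVerts C) := by
  convert (fromEdgeSet (C : Set (Sym2 V))).even_card_odd_degree_vertices using 3
  simp only [oddVerts, degree_fromEdgeSet_eq_card_filter hC]

lemma oddVerts_filter_of_closed {C : Finset (Sym2 V)} {K : Finset V}
    (hK : ∀ e ∈ C, ∀ u ∈ e, ∀ w ∈ e, u ∈ K → w ∈ K) :
    oddVerts (C.filter fun e => ∀ u ∈ e, u ∈ K) = oddVerts C ∩ K := by
  ext v
  by_cases hv : v ∈ K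
  · have : (C.filter fun e => ∀ u ∈ e, u ∈ K).filter (v ∈ ·) = C.filter (v ∈ ·) := by
      rw [filter_filter]
      exact filter_congr fun e he =>
        ⟨And.right, fun hve => ⟨fun u hu => hK e he v hve u hu hv, hve⟩⟩
    simp [mem_oddVerts, this, hv]
  · have : (C.filter fun e => ∀ u ∈ e, u ∈ K).filter (v ∈ ·) = ∅ := by
      rw [filter_filter, filter_eq_empty_iff]
      exact fun e _ h => hv (h.1 v h.2)
    simp [mem_oddVerts, this, hv]

lemma reachable_fromEdgeSet_of_oddVerts_eq {C : Finset (Sym2 V)} (hC : ∀ e ∈ C, ¬e.IsDiag)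
    {x y : V} (h : oddVerts C = {x} ∆ {y}) :
    (fromEdgeSet (C : Set (Sym2 V))).Reachable x y := by
  set H := fromEdgeSet (C : Set (Sym2 V))
  by_contra hxy
  set K := univ.filter (H.Reachable x)
  have hK : ∀ e ∈ C, ∀ u ∈ e, ∀ w ∈ e, u ∈ K → w ∈ K := by
    intro e he u hu w hw huK
    simp only [K, mem_filter, mem_univ, true_and] at huK ⊢
    by_cases huw : u = w
    · exact huw ▸ huK
    · refine huK.trans (Adj.reachable ?_)
      rw [fromEdgeSet_adj, ← (Sym2.mem_and_mem_iff huw).1 ⟨hu, hw⟩]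
      exact ⟨he, huw⟩
  have hne : x ≠ y := fun h => hxy (h ▸ Reachable.refl x)
  -- Otherwise the edges inside the component of `x` would have `x` as their only odd vertex.
  have heven := even_card_oddVerts (C := C.filter fun e => ∀ u ∈ e, u ∈ K)
    fun e he => hC e (mem_filter.1 he).1
  have : oddVerts C ∩ K = {x} := by
    ext v
    simp only [h, K, mem_inter, mem_symmDiff, mem_singleton, mem_filter, mem_univ, true_and]
    constructor
    · rintro ⟨⟨rfl, -⟩ | ⟨rfl, -⟩, hr⟩
      · rfl
      · exact absurd hr hxy
    · rintro rfl
      exact ⟨Or.inl ⟨rfl, hne⟩, Reachable.refl _⟩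
  rw [oddVerts_filter_of_closed hK, this] at heven
  simp at heven

lemma SimpleGraph.Walk.IsTrail.oddVerts_edges {G : SimpleGraph V} {x y : V} {p : G.Walk x y}
    (hp : p.IsTrail) : oddVerts p.edges.toFinset = {x} ∆ {y} := by
  ext v
  have hcount : #(p.edges.toFinset.filter (v ∈ ·)) = p.edges.countP (v ∈ ·) := by
    have : p.edges.toFinset.filter (v ∈ ·) = (p.edges.filter (v ∈ ·)).toFinset := by
      ext e
      simp
    rw [this, List.card_toFinset, (hp.edges_nodup.filter _).dedup,
      List.countP_eq_length_filter]
  have := hp.even_countP_edges_iff v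
  rw [mem_oddVerts, hcount, ← Nat.not_even_iff_odd, this, mem_symmDiff, mem_singleton,
    mem_singleton]
  grind

lemma exists_isPath_edges_subset_of_oddVerts_eq {G : SimpleGraph V} {C : Finset (Sym2 V)}
    (hC : (C : Set (Sym2 V)) ⊆ G.edgeSet) {x y : V} (h : oddVerts C = {x} ∆ {y}) :
    ∃ q : G.Walk x y, q.IsPath ∧ q.edges.toFinset ⊆ C := by
  obtain ⟨w⟩ := reachable_fromEdgeSet_of_oddVerts_eq
    (fun e he => G.not_isDiag_of_mem_edgeSet (hC he)) h
  have hw : ∀ e ∈ w.toPath.val.edges, e ∈ C := fun e he =>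
    (edgeSet_fromEdgeSet _ ▸ w.toPath.val.edges_subset_edgeSet he).1
  refine ⟨w.toPath.val.transfer G fun e he => hC (hw e he),
    w.toPath.property.transfer _, fun e he => ?_⟩
  rw [List.mem_toFinset, Walk.edges_transfer] at he
  exact hw e he

lemma isJoin_coe_iff {G : SimpleGraph V} {T : Set V} {s : Finset (Sym2 V)} :
    IsJoin G T s ↔ (s : Set (Sym2 V)) ⊆ G.edgeSet ∧ (oddVerts s : Set V) = T := by
  simp only [IsJoin, Set.ext_iff, Finset.mem_coe, mem_oddVerts, ← coe_filter,
    Set.ncard_coe_finset]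

omit [Fintype V] [DecidableEq V] in
lemma IsMinJoin.ncard_eq {G : SimpleGraph V} {T : Set V} {F₁ F₂ : Set (Sym2 V)}
    (h₁ : IsMinJoin G T F₁) (h₂ : IsMinJoin G T F₂) : F₁.ncard = F₂.ncard :=
  (h₁.2 _ h₂.1).antisymm (h₂.2 _ h₁.1)

omit [Fintype V] in
lemma sum_ew_eq_card_symmDiff_sub_card (s C : Finset (Sym2 V)) :
    ∑ e ∈ C, ew (s : Set (Sym2 V)) e = #(s ∆ C) - #s := by
  have hw : ∑ e ∈ C, ew (s : Set (Sym2 V)) e = #C - 2 * #(s ∩ C) := by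
    simp only [ew, Finset.mem_coe, sum_ite, sum_const, smul_neg, nsmul_eq_mul, mul_one]
    have := card_filter_add_card_filter_not (s := C) (· ∈ s)
    rw [filter_mem_eq_inter, inter_comm] at *
    omega
  have := card_symmDiff_add_two_mul_card_inter s C
  omega

lemma sum_ew_symmDiff_symmDiff {s₁ s₂ : Finset (Sym2 V)} (hcard : #s₁ = #s₂)
    (A : Finset (Sym2 V)) :
    ∑ e ∈ A ∆ (s₁ ∆ s₂), ew (s₁ : Set (Sym2 V)) e =
      ∑ e ∈ A, ew (s₂ : Set (Sym2 V)) e := by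
  rw [sum_ew_eq_card_symmDiff_sub_card, sum_ew_eq_card_symmDiff_sub_card, symmDiff_left_comm,
    symmDiff_symmDiff_cancel_left, symmDiff_comm, hcard]

lemma IsMinJoin.sum_ew_nonneg {G : SimpleGraph V} {T : Set V} {s C : Finset (Sym2 V)}
    (hs : IsMinJoin G T s) (hC : (C : Set (Sym2 V)) ⊆ G.edgeSet) (hCeven : oddVerts C = ∅) :
    0 ≤ ∑ e ∈ C, ew (s : Set (Sym2 V)) e := by
  have hjoin : IsJoin G T ↑(s ∆ C) := by
    obtain ⟨hsG, hsT⟩ := isJoin_coe_iff.1 hs.1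
    refine isJoin_coe_iff.2 ⟨?_, ?_⟩
    · rw [coe_symmDiff]
      exact symmDiff_le_sup.trans (sup_le hsG hC)
    · rwa [oddVerts_symmDiff, hCeven, ← bot_eq_empty, symmDiff_bot]
  have := hs.2 _ hjoin
  rw [Set.ncard_coe_finset, Set.ncard_coe_finset] at this
  rw [sum_ew_eq_card_symmDiff_sub_card]
  omega

omit [Fintype V] in
lemma walkWeight_eq_sum {G : SimpleGraph V} {F : Set (Sym2 V)} {x y : V} {p : G.Walk x y}
    (hp : p.edges.Nodup) : walkWeight F p = ∑ e ∈ p.edges.toFinset, ew F e := by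
  rw [walkWeight, List.sum_toFinset _ hp]

lemma bddBelow_pathWeights (G : SimpleGraph V) (F : Set (Sym2 V)) (x y : V) :
    BddBelow {w : ℤ | ∃ p : G.Walk x y, p.IsPath ∧ walkWeight F p = w} := by
  refine ⟨-Fintype.card (Sym2 V), ?_⟩
  rintro _ ⟨p, hp, rfl⟩
  have hew : ∀ e ∈ p.edges.toFinset, -1 ≤ ew F e := fun e _ => by
    unfold ew
    split_ifs <;> norm_num
  have hsum : -(#p.edges.toFinset : ℤ) ≤ ∑ e ∈ p.edges.toFinset, ew F e := by
    simpa using card_nsmul_le_sum _ _ _ hew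
  have := card_le_univ p.edges.toFinset
  rw [walkWeight_eq_sum hp.isTrail.edges_nodup]
  omega

lemma distF_le_walkWeight {G : SimpleGraph V} (F : Set (Sym2 V)) {x y : V} {p : G.Walk x y}
    (hp : p.IsPath) : distF G F x y ≤ walkWeight F p :=
  csInf_le (bddBelow_pathWeights G F x y) ⟨p, hp, rfl⟩

lemma exists_isPath_walkWeight_eq_distF {G : SimpleGraph V} (F : Set (Sym2 V)) {x y : V}
    (hxy : G.Reachable x y) : ∃ p : G.Walk x y, p.IsPath ∧ walkWeight F p = distF G F x y := by
  refine Int.csInf_mem ?_ (bddBelow_pathWeights G F x y)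
  obtain ⟨w⟩ := hxy
  exact ⟨_, w.toPath.val, w.toPath.property, rfl⟩

lemma IsMinJoin.distF_le {G : SimpleGraph V} {T : Set V} {s₁ s₂ : Finset (Sym2 V)}
    (h₁ : IsMinJoin G T s₁) (h₂ : IsMinJoin G T s₂) {x y : V} (hxy : G.Reachable x y) :
    distF G s₁ x y ≤ distF G s₂ x y := by
  obtain ⟨p, hp, hpw⟩ := exists_isPath_walkWeight_eq_distF (s₂ : Set (Sym2 V)) hxy
  obtain ⟨hs₁G, hs₁T⟩ := isJoin_coe_iff.1 h₁.1
  obtain ⟨hs₂G, hs₂T⟩ := isJoin_coe_iff.1 h₂.1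
  set A := p.edges.toFinset
  set B := A ∆ (s₁ ∆ s₂)
  have hBG : (B : Set (Sym2 V)) ⊆ G.edgeSet := by
    simp only [B, coe_symmDiff]
    refine symmDiff_le_sup.trans (sup_le (fun e he => ?_) ?_)
    · exact p.edges_subset_edgeSet (List.mem_toFinset.1 he)
    · exact symmDiff_le_sup.trans (sup_le hs₁G hs₂G)
  have hBodd : oddVerts B = {x} ∆ {y} := by
    rw [oddVerts_symmDiff, oddVerts_symmDiff, hp.isTrail.oddVerts_edges,
      coe_inj.1 (hs₁T.trans hs₂T.symm), symmDiff_self, symmDiff_bot]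
  obtain ⟨q, hq, hqB⟩ := exists_isPath_edges_subset_of_oddVerts_eq hBG hBodd
  have hrest : 0 ≤ ∑ e ∈ B \ q.edges.toFinset, ew (s₁ : Set (Sym2 V)) e := by
    refine h₁.sum_ew_nonneg (fun e he => hBG (mem_sdiff.1 he).1) ?_
    rw [← symmDiff_of_ge hqB, oddVerts_symmDiff, hq.isTrail.oddVerts_edges, hBodd,
      symmDiff_self, bot_eq_empty]
  calc distF G s₁ x y
      ≤ walkWeight s₁ q := distF_le_walkWeight _ hq
    _ = ∑ e ∈ q.edges.toFinset, ew (s₁ : Set (Sym2 V)) e :=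
      walkWeight_eq_sum hq.isTrail.edges_nodup
    _ ≤ ∑ e ∈ B, ew (s₁ : Set (Sym2 V)) e := by rw [← sum_sdiff hqB]; linarith
    _ = ∑ e ∈ A, ew (s₂ : Set (Sym2 V)) e := by
      refine sum_ew_symmDiff_symmDiff ?_ A
      simpa only [Set.ncard_coe_finset] using h₁.ncard_eq h₂
    _ = distF G s₂ x y := by rw [← hpw, walkWeight_eq_sum hp.isTrail.edges_nodup]

theorem stmt_2_general (G : SimpleGraph V) (T : Set V)
    (x y : V) (hxy : G.Reachable x y)
    (F₁ F₂ : Set (Sym2 V)) (h₁ : IsMinJoin G T F₁) (h₂ : IsMinJoin G T F₂) :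
    distF G F₁ x y = distF G F₂ x y := by
  obtain ⟨s₁, rfl⟩ := F₁.toFinite.exists_finset_coe
  obtain ⟨s₂, rfl⟩ := F₂.toFinite.exists_finset_coe
  exact (h₁.distF_le h₂ hxy).antisymm (h₂.distF_le h₁ hxy)

/-- the `F`-distance between two vertices of the same connected component
does not depend on the choice of the minimum join `F`. -/
theorem stmt_2 (G : SimpleGraph V) (T : Set V) (hG : IsGraft G T)
    (x y : V) (hxy : G.Reachable x y)
    (F₁ F₂ : Set (Sym2 V)) (h₁ : IsMinJoin G T F₁) (h₂ : IsMinJoin G T F₂) :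
    distF G F₁ x y = distF G F₂ x y :=
  stmt_2_general G T x y hxy F₁ F₂ h₁ h₂
end

section
/- Let (G, T) be a factor-critical graft with root r, i.e., G is a factor-critical graph and T = V(G) ∖ {r}. Then every minimum join of (G, T) is a matching of G that covers every vertex of G except r. -/
/-!
A perfect matching `M` of `G - r` is itself a join of `(G, V ∖ {r})`, so a minimum join `F`
satisfies `2|F| ≤ 2|M| = |V| - 1`. Every vertex `v ≠ r` has odd, hence positive, degree in `F`,
while all degrees in `F` sum to `2|F| ≤ |V| - 1`. Hence every `v ≠ r` has degree exactly one in
`F` and `r` has degree zero.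
-/

open SimpleGraph
open scoped Classical

variable {V : Type*} [Fintype V] [DecidableEq V]

/-- `F` is a matching: its edges are pairwise disjoint. -/
def IsMatchingSet (F : Set (Sym2 V)) : Prop :=
  ∀ e ∈ F, ∀ e' ∈ F, e ≠ e' → ∀ v : V, v ∈ e → v ∉ e'

set_option linter.unusedSectionVars false

lemma sum_ncard_incident_eq_two_mul_ncard {F : Set (Sym2 V)} (hF : ∀ e ∈ F, ¬e.IsDiag) :
    ∑ v, {e ∈ F | v ∈ e}.ncard = 2 * F.ncard := by
  have hE : (fromEdgeSet F).edgeSet = F := by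
    rw [edgeSet_fromEdgeSet, sdiff_eq_left]
    exact Set.disjoint_left.mpr fun e he hd => hF e he hd
  have hdeg : ∀ v, {e ∈ F | v ∈ e}.ncard = (fromEdgeSet F).degree v := fun v => by
    rw [← card_incidenceSet_eq_degree, ← Nat.card_eq_fintype_card, Nat.card_coe_set_eq]
    simp only [incidenceSet, hE]
  simp_rw [hdeg, sum_degrees_eq_twice_card_edges, ← Set.ncard_coe_finset, coe_edgeFinset, hE]

lemma SimpleGraph.Subgraph.IsMatching.ncard_incidenceSet {G : SimpleGraph V} {M : G.Subgraph}
    (hM : M.IsMatching) (v : V) : (M.incidenceSet v).ncard = if v ∈ M.verts then 1 else 0 := by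
  split_ifs with hv
  · obtain ⟨w, hvw, hw⟩ := hM hv
    rw [Set.ncard_eq_one]
    refine ⟨s(v, w), Set.eq_singleton_iff_unique_mem.mpr ⟨⟨hvw, Sym2.mem_mk_left v w⟩, ?_⟩⟩
    rintro e ⟨he, hve⟩
    obtain ⟨u, rfl⟩ := Sym2.mem_iff_exists.mp hve
    rw [hw u he]
  · rw [Set.ncard_eq_zero]
    exact Set.eq_empty_of_forall_notMem fun e he => hv (M.mem_verts_of_mem_edge he.1 he.2)

lemma sum_ite_mem_eq_ncard (T : Set V) : ∑ v, (if v ∈ T then 1 else 0) = T.ncard := by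
  rw [Finset.sum_boole, Nat.cast_id, ← Set.ncard_coe_finset]
  congr
  ext; simp

lemma SimpleGraph.Subgraph.IsMatching.isJoin {G : SimpleGraph V} {M : G.Subgraph}
    (hM : M.IsMatching) : IsJoin G M.verts M.edgeSet := by
  refine ⟨M.edgeSet_subset, fun v => ?_⟩
  have := hM.ncard_incidenceSet v
  simp only [Subgraph.incidenceSet] at this
  split_ifs at this with hv <;> simp [this, hv]

lemma SimpleGraph.Subgraph.IsMatching.two_mul_ncard_edgeSet {G : SimpleGraph V} {M : G.Subgraph}
    (hM : M.IsMatching) : 2 * M.edgeSet.ncard = M.verts.ncard := by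
  rw [← sum_ncard_incident_eq_two_mul_ncard fun e he =>
    G.not_isDiag_of_mem_edgeSet (M.edgeSet_subset he), ← sum_ite_mem_eq_ncard]
  exact Finset.sum_congr rfl fun v _ => hM.ncard_incidenceSet v

lemma IsJoin.ncard_incident_eq_ite_of_two_mul_le {G : SimpleGraph V} {T : Set V} {F : Set (Sym2 V)}
    (hF : IsJoin G T F) (hcard : 2 * F.ncard ≤ T.ncard) (v : V) :
    {e ∈ F | v ∈ e}.ncard = if v ∈ T then 1 else 0 := by
  have hle : ∀ u ∈ Finset.univ, (if u ∈ T then 1 else 0) ≤ {e ∈ F | u ∈ e}.ncard := by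
    intro u _
    split_ifs with hu
    · exact ((hF.2 u).mpr hu).pos
    · exact Nat.zero_le _
  have hsum : ∑ u, {e ∈ F | u ∈ e}.ncard ≤ ∑ u, (if u ∈ T then 1 else 0) := by
    rw [sum_ncard_incident_eq_two_mul_ncard fun e he =>
      G.not_isDiag_of_mem_edgeSet (hF.1 he), sum_ite_mem_eq_ncard]
    exact hcard
  exact ((Finset.sum_eq_sum_iff_of_le hle).mp (hsum.antisymm' (Finset.sum_le_sum hle))
    v (Finset.mem_univ v)).symm

lemma isMatchingSet_of_ncard_incident_le_one {F : Set (Sym2 V)}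
    (hF : ∀ v, {e ∈ F | v ∈ e}.ncard ≤ 1) : IsMatchingSet F :=
  fun _ he _ he' hne v hve hve' =>
    hne (Set.ncard_le_one_iff (Set.toFinite _) |>.mp (hF v) ⟨he, hve⟩ ⟨he', hve'⟩)

lemma covers_iff_ncard_incident_pos {F : Set (Sym2 V)} {v : V} :
    Covers F v ↔ 0 < {e ∈ F | v ∈ e}.ncard := by
  rw [Set.ncard_pos (Set.toFinite _)]
  rfl

theorem stmt_5_general (G : SimpleGraph V) (T : Set V) (r : V)
    (hfc : ∀ v : V, ∃ M : G.Subgraph, M.IsMatching ∧ M.verts = {v}ᶜ)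
    (hT : T = ({r}ᶜ : Set V))
    (F : Set (Sym2 V)) (hF : IsMinJoin G T F) :
    IsMatchingSet F ∧ (∀ v : V, v ≠ r → Covers F v) ∧ ¬Covers F r := by
  subst hT
  obtain ⟨M, hM, hMv⟩ := hfc r
  have hcard : 2 * F.ncard ≤ ({r}ᶜ : Set V).ncard :=
    calc 2 * F.ncard ≤ 2 * M.edgeSet.ncard := Nat.mul_le_mul_left 2 (hF.2 _ (hMv ▸ hM.isJoin))
      _ = _ := by rw [hM.two_mul_ncard_edgeSet, hMv]
  have hdeg := hF.1.ncard_incident_eq_ite_of_two_mul_le hcard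
  refine ⟨isMatchingSet_of_ncard_incident_le_one fun v => ?_, fun v hv => ?_, ?_⟩
  · rw [hdeg]; split_ifs <;> simp
  · simp [covers_iff_ncard_incident_pos, hdeg, hv]
  · simp [covers_iff_ncard_incident_pos, hdeg]

/-- every minimum join of a factor-critical graft `(G, V(G) ∖ {r})` with
root `r` is a matching covering every vertex of `G` except `r`. -/
theorem stmt_5 (G : SimpleGraph V) (T : Set V) (r : V)
    (hfc : ∀ v : V, ∃ M : G.Subgraph, M.IsMatching ∧ M.verts = {v}ᶜ)
    (hT : T = ({r}ᶜ : Set V)) (hG : IsGraft G T)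
    (F : Set (Sym2 V)) (hF : IsMinJoin G T F) :
    IsMatchingSet F ∧ (∀ v : V, v ≠ r → Covers F v) ∧ ¬Covers F r :=
  stmt_5_general G T r hfc hT F hF
end

section
/- Let (G, T) be a rake with head r and tooth set B. Then the set E_G[r, B] of edges between r and B is a connected minimum join of (G, T), and (G, T) is a strong comb with respect to r with tooth set B. -/
open SimpleGraph
open scoped Classical

variable {V : Type*} [Fintype V] [DecidableEq V]

/-- `(G, T)` is a rake with head `r` and tooth set `B`. -/
def IsRake (G : SimpleGraph V) (T : Set V) (r : V) (B : Set V) : Prop :=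
  B ⊆ T ∧
  (∀ x ∈ B, ∀ y ∈ B, ¬G.Adj x y) ∧
  (∀ v : V, v ∉ B → ∃ b ∈ B, G.Adj v b) ∧
  r ∉ B ∧ (∀ b ∈ B, G.Adj r b) ∧
  (Odd B.ncard → T = B ∪ {r}) ∧ (¬Odd B.ncard → T = B)

/-- `(G, T)` is a strong comb with respect to `r` with tooth set `B`. -/
def IsStrongComb (G : SimpleGraph V) (T : Set V) (r : V) (B : Set V) : Prop :=
  (∀ x ∈ B, ∀ y ∈ B, ¬G.Adj x y) ∧
  (∀ v : V, v ∉ B → ∃ b ∈ B, G.Adj v b) ∧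
  r ∉ B ∧
  ∀ F : Set (Sym2 V), IsMinJoin G T F →
    (∀ x ∈ B, distF G F r x = -1) ∧ (∀ x : V, x ∉ B → distF G F r x = 0)

/-!
Every vertex of the independent set `B ⊆ T` needs its own edge of a join, so a join has at least
`|B|` edges, and the star from `r` to `B` attains this bound. Hence a minimum join `F` has exactly
`|B|` edges, each hanging on a tooth of its own. Along a path leaving `r ∉ B`, the two edges at an
inner tooth are not both in `F` and an edge avoiding `B` is not in `F`, so only a tooth endpoint can
make the weight negative: the weight is at least `-1` towards a tooth and `0` elsewhere. Paths of
length at most four, alternating through a vertex outside `T`, attain these bounds.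
-/

section

omit [Fintype V] [DecidableEq V]

lemma neg_one_le_ew (F : Set (Sym2 V)) (e : Sym2 V) : -1 ≤ ew F e := by
  unfold ew; split_ifs <;> norm_num

lemma ew_of_notMem {F : Set (Sym2 V)} {e : Sym2 V} (h : e ∉ F) : ew F e = 1 := if_neg h

lemma ew_of_mem {F : Set (Sym2 V)} {e : Sym2 V} (h : e ∈ F) : ew F e = -1 := if_pos h

@[simp]
lemma walkWeight_nil {G : SimpleGraph V} {a : V} (F : Set (Sym2 V)) :
    walkWeight F (Walk.nil : G.Walk a a) = 0 := rfl

@[simp]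
lemma walkWeight_cons {G : SimpleGraph V} {a b c : V} (F : Set (Sym2 V)) (h : G.Adj a b)
    (p : G.Walk b c) : walkWeight F (Walk.cons h p) = ew F s(a, b) + walkWeight F p := by
  simp [walkWeight]

@[simp]
lemma walkWeight_concat {G : SimpleGraph V} {a b c : V} (F : Set (Sym2 V)) (p : G.Walk a b)
    (h : G.Adj b c) : walkWeight F (p.concat h) = walkWeight F p + ew F s(b, c) := by
  simp [walkWeight, Walk.edges_concat]

variable {G : SimpleGraph V} {T B : Set V} {F : Set (Sym2 V)}

lemma IsJoin.exists_edge_of_mem (hF : IsJoin G T F) {v : V} (hv : v ∈ T) :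
    ∃ w, s(v, w) ∈ F := by
  have hodd := (hF.2 v).mpr hv
  obtain ⟨e, heF, hve⟩ : {e ∈ F | v ∈ e}.Nonempty :=
    Set.nonempty_of_ncard_ne_zero fun h => by simp [h] at hodd
  obtain ⟨w, rfl⟩ := Sym2.mem_iff_exists.mp hve
  exact ⟨w, heF⟩

lemma IsJoin.exists_other_edge (hF : IsJoin G T F) {u v : V} (hv : v ∉ T) (huv : s(u, v) ∈ F) :
    ∃ w, w ≠ u ∧ s(w, v) ∈ F := by
  by_contra! h
  have hstar : {e ∈ F | v ∈ e} = {s(u, v)} := by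
    ext e
    refine ⟨fun ⟨heF, hve⟩ => ?_, fun he => he ▸ ⟨huv, Sym2.mem_mk_right u v⟩⟩
    obtain ⟨w, rfl⟩ := Sym2.mem_iff_exists.mp hve
    rw [Sym2.eq_swap] at heF ⊢
    by_cases hwu : w = u
    · rw [hwu]; rfl
    · exact absurd heF (h w hwu)
  exact hv ((hF.2 v).mp (by simp [hstar]))

lemma IsJoin.exists_injOn_partner (hF : IsJoin G T F) (hBT : B ⊆ T) (hB : G.IsIndepSet B) :
    ∃ w : V → V, (∀ b ∈ B, s(b, w b) ∈ F) ∧ Set.InjOn (fun b => s(b, w b)) B := by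
  choose! w hw using fun b (hb : b ∈ B) => hF.exists_edge_of_mem (hBT hb)
  refine ⟨w, hw, fun b hb c hc hbc => ?_⟩
  by_contra hne
  have hcw : c = w b := by
    have hc_mem : c ∈ s(b, w b) := by
      rw [show s(b, w b) = s(c, w c) from hbc]; exact Sym2.mem_mk_left c (w c)
    exact (Sym2.mem_iff.mp hc_mem).resolve_left (Ne.symm hne)
  exact hB hb hc hne (G.mem_edgeSet.mp (hcw ▸ hF.1 (hw b hb)))

lemma IsJoin.ncard_le [Finite V] (hF : IsJoin G T F) (hBT : B ⊆ T) (hB : G.IsIndepSet B) :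
    B.ncard ≤ F.ncard := by
  obtain ⟨w, hw, hinj⟩ := hF.exists_injOn_partner hBT hB
  exact Set.ncard_le_ncard_of_injOn _ hw hinj

structure HasPrivateTeeth (B : Set V) (F : Set (Sym2 V)) : Prop where
  exists_mem : ∀ e ∈ F, ∃ b ∈ B, b ∈ e
  eq_of_mem : ∀ b ∈ B, ∀ e ∈ F, ∀ e' ∈ F, b ∈ e → b ∈ e' → e = e'

lemma IsJoin.hasPrivateTeeth [Finite V] (hF : IsJoin G T F) (hBT : B ⊆ T) (hB : G.IsIndepSet B)
    (hcard : F.ncard ≤ B.ncard) : HasPrivateTeeth B F := by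
  obtain ⟨w, hw, hinj⟩ := hF.exists_injOn_partner hBT hB
  have himage : (fun b => s(b, w b)) '' B = F :=
    Set.eq_of_subset_of_ncard_le (Set.image_subset_iff.mpr hw)
      (by rwa [hinj.ncard_image]) (Set.toFinite F)
  have heq : ∀ b ∈ B, ∀ e ∈ F, b ∈ e → e = s(b, w b) := by
    intro b hb e he hbe
    obtain ⟨c, hc, rfl⟩ := himage ▸ he
    rcases Sym2.mem_iff.mp hbe with rfl | rfl
    · rfl
    · have hadj := G.mem_edgeSet.mp (hF.1 (hw c hc))
      exact absurd hadj (hB hc hb hadj.ne)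
  refine ⟨fun e he => ?_, fun b hb e he e' he' hbe hbe' =>
    (heq b hb e he hbe).trans (heq b hb e' he' hbe').symm⟩
  obtain ⟨b, hb, rfl⟩ := himage ▸ he
  exact ⟨b, hb, Sym2.mem_mk_left _ _⟩

lemma HasPrivateTeeth.notMem (hF : HasPrivateTeeth B F) {a v : V} (ha : a ∉ B) (hv : v ∉ B) :
    s(a, v) ∉ F := fun h => by
  obtain ⟨b, hb, hbe⟩ := hF.exists_mem _ h
  rcases Sym2.mem_iff.mp hbe with rfl | rfl
  exacts [ha hb, hv hb]

lemma HasPrivateTeeth.ew_add_ew_nonneg (hF : HasPrivateTeeth B F) {b : V} (hb : b ∈ B)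
    {e e' : Sym2 V} (hne : e ≠ e') (he : b ∈ e) (he' : b ∈ e') : 0 ≤ ew F e + ew F e' := by
  by_cases heF : e ∈ F
  · have he'F : e' ∉ F := fun h => hne (hF.eq_of_mem b hb e heF e' h he he')
    rw [ew_of_mem heF, ew_of_notMem he'F]; norm_num
  · linarith [ew_of_notMem heF, neg_one_le_ew F e']

lemma neg_indicator_le_walkWeight (hB : G.IsIndepSet B) (hF : HasPrivateTeeth B F) :
    ∀ {a x : V} (p : G.Walk a x), p.IsTrail → a ∉ B → -B.indicator 1 x ≤ walkWeight F p
  | _, x, .nil, _, _ => by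
    by_cases hx : x ∈ B <;> simp [hx]
  | a, _, .cons (v := v) hav .nil, _, ha => by
    by_cases hv : v ∈ B
    · simpa [hv] using neg_one_le_ew F s(a, v)
    · simp [hv, ew_of_notMem (hF.notMem ha hv)]
  | a, _, .cons (v := v) hav (.cons (v := u) hvu q), hp, ha => by
    by_cases hv : v ∈ B
    · have hu : u ∉ B := fun hu => hB hv hu hvu.ne hvu
      have hne : s(a, v) ≠ s(v, u) := by
        have := hp.edges_nodup
        simp only [Walk.edges_cons, List.nodup_cons, List.mem_cons] at this
        exact fun h => this.1 (Or.inl h)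
      have hq := neg_indicator_le_walkWeight hB hF q hp.of_cons.of_cons hu
      have hpair := hF.ew_add_ew_nonneg hv hne (Sym2.mem_mk_right a v) (Sym2.mem_mk_left v u)
      simp only [walkWeight_cons]
      linarith
    · have hq := neg_indicator_le_walkWeight hB hF (.cons hvu q) hp.of_cons hv
      rw [walkWeight_cons, ew_of_notMem (hF.notMem ha hv)]
      linarith

lemma distF_eq_of_forall_le {G : SimpleGraph V} {F : Set (Sym2 V)} {x y : V} {m : ℤ}
    (hex : ∃ p : G.Walk x y, p.IsPath ∧ walkWeight F p = m)
    (hle : ∀ p : G.Walk x y, p.IsPath → m ≤ walkWeight F p) : distF G F x y = m :=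
  IsLeast.csInf_eq ⟨hex, by rintro _ ⟨p, hp, rfl⟩; exact hle p hp⟩

def spokes (G : SimpleGraph V) (r : V) (B : Set V) : Set (Sym2 V) :=
  {e ∈ G.edgeSet | ∃ b ∈ B, e = s(r, b)}

namespace IsRake

variable {G : SimpleGraph V} {T : Set V} {r : V} {B : Set V} {F : Set (Sym2 V)}

lemma subset (h : IsRake G T r B) : B ⊆ T := h.1

lemma isIndepSet (h : IsRake G T r B) : G.IsIndepSet B := fun x hx y hy _ => h.2.1 x hx y hy

lemma exists_adj (h : IsRake G T r B) {v : V} (hv : v ∉ B) : ∃ b ∈ B, G.Adj v b := h.2.2.1 v hv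

lemma head_notMem (h : IsRake G T r B) : r ∉ B := h.2.2.2.1

lemma adj_head (h : IsRake G T r B) {b : V} (hb : b ∈ B) : G.Adj r b := h.2.2.2.2.1 b hb

lemma head_mem_iff (h : IsRake G T r B) : r ∈ T ↔ Odd B.ncard := by
  by_cases hodd : Odd B.ncard
  · simp [h.2.2.2.2.2.1 hodd, hodd]
  · simp [h.2.2.2.2.2.2 hodd, hodd, h.head_notMem]

lemma notMem_of_ne (h : IsRake G T r B) {v : V} (hvB : v ∉ B) (hvr : v ≠ r) : v ∉ T := by
  by_cases hodd : Odd B.ncard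
  · simp [h.2.2.2.2.2.1 hodd, hvB, hvr]
  · simpa [h.2.2.2.2.2.2 hodd] using hvB

lemma spokes_eq (h : IsRake G T r B) : spokes G r B = (s(r, ·)) '' B := by
  ext e
  constructor
  · rintro ⟨-, b, hb, rfl⟩
    exact ⟨b, hb, rfl⟩
  · rintro ⟨b, hb, rfl⟩
    exact ⟨h.adj_head hb, b, hb, rfl⟩

lemma ncard_spokes (h : IsRake G T r B) : (spokes G r B).ncard = B.ncard := by
  rw [h.spokes_eq]
  refine Set.InjOn.ncard_image fun b hb c hc hbc => ?_
  rcases Sym2.eq_iff.mp hbc with ⟨-, hbc⟩ | ⟨hrc, -⟩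
  exacts [hbc, absurd (hrc ▸ hc) h.head_notMem]

lemma isJoin_spokes (h : IsRake G T r B) : IsJoin G T (spokes G r B) := by
  refine ⟨fun e he => he.1, fun v => ?_⟩
  by_cases hvB : v ∈ B
  · have hstar : {e ∈ spokes G r B | v ∈ e} = {s(r, v)} := by
      ext e
      rw [h.spokes_eq]
      constructor
      · rintro ⟨⟨b, hb, rfl⟩, hv⟩
        rcases Sym2.mem_iff.mp hv with rfl | rfl
        exacts [absurd hvB h.head_notMem, rfl]
      · rintro rfl
        exact ⟨⟨v, hvB, rfl⟩, Sym2.mem_mk_right r v⟩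
    simp [hstar, h.subset hvB]
  · by_cases hvr : v = r
    · subst hvr
      have hstar : {e ∈ spokes G v B | v ∈ e} = spokes G v B := by
        ext e
        refine ⟨fun he => he.1, fun he => ⟨he, ?_⟩⟩
        obtain ⟨-, b, -, rfl⟩ := he
        exact Sym2.mem_mk_left v b
      rw [hstar, h.ncard_spokes, h.head_mem_iff]
    · have hstar : {e ∈ spokes G r B | v ∈ e} = ∅ := by
        refine Set.eq_empty_of_forall_notMem fun e ⟨⟨_, b, hb, he⟩, hv⟩ => ?_
        subst he
        rcases Sym2.mem_iff.mp hv with rfl | rfl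
        exacts [hvr rfl, hvB hb]
      simp [hstar, h.notMem_of_ne hvB hvr]

lemma isMinJoin_spokes [Finite V] (h : IsRake G T r B) : IsMinJoin G T (spokes G r B) :=
  ⟨h.isJoin_spokes, fun _ hF => h.ncard_spokes ▸ hF.ncard_le h.subset h.isIndepSet⟩

lemma connectedEdgeSet_spokes (h : IsRake G T r B) : ConnectedEdgeSet (spokes G r B) := by
  obtain ⟨b, hb, -⟩ := h.exists_adj h.head_notMem
  have hreach : ∀ x, Covers (spokes G r B) x → (fromEdgeSet (spokes G r B)).Reachable r x := by
    rintro x ⟨e, he, hx⟩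
    obtain ⟨-, c, hc, rfl⟩ := he
    rcases Sym2.mem_iff.mp hx with rfl | rfl
    · rfl
    · refine Adj.reachable ?_
      rw [fromEdgeSet_adj]
      exact ⟨h.spokes_eq ▸ ⟨x, hc, rfl⟩, (h.adj_head hc).ne⟩
  exact ⟨⟨s(r, b), h.spokes_eq ▸ ⟨b, hb, rfl⟩⟩,
    fun x y hx hy => (hreach x hx).symm.trans (hreach y hy)⟩

/-- The vertex `u ∉ T` has even `F`-degree, so a second edge of `F` leaves it. -/
lemma exists_detour (h : IsRake G T r B) (hF : IsJoin G T F) (ht : HasPrivateTeeth B F)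
    {b u : V} (hu : u ∉ B) (hur : u ≠ r) (hbu : s(b, u) ∈ F) :
    ∃ y ∈ B, y ≠ b ∧ s(r, y) ∉ F ∧ s(y, u) ∈ F := by
  obtain ⟨y, hyb, hyu⟩ := hF.exists_other_edge (h.notMem_of_ne hu hur) hbu
  have hy : y ∈ B := by
    obtain ⟨c, hc, hce⟩ := ht.exists_mem _ hyu
    rcases Sym2.mem_iff.mp hce with rfl | rfl
    exacts [hc, absurd hc hu]
  refine ⟨y, hy, hyb, fun hry => ?_, hyu⟩
  rcases Sym2.eq_iff.mp (ht.eq_of_mem y hy _ hry _ hyu (Sym2.mem_mk_right r y)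
    (Sym2.mem_mk_left y u)) with ⟨hry, -⟩ | ⟨hru, -⟩
  exacts [h.head_notMem (hry ▸ hy), hur hru.symm]

lemma exists_path_to_tooth (h : IsRake G T r B) (hF : IsJoin G T F) (ht : HasPrivateTeeth B F)
    {x : V} (hx : x ∈ B) : ∃ p : G.Walk r x, p.IsPath ∧ walkWeight F p = -1 ∧
      ∀ u ∈ p.support, u ∉ B → u ≠ r → s(x, u) ∈ F := by
  obtain ⟨v, hxv⟩ := hF.exists_edge_of_mem (h.subset hx)
  have hadj : G.Adj x v := hF.1 hxv
  have hv : v ∉ B := fun hv => h.isIndepSet hx hv hadj.ne hadj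
  have hrx : r ≠ x := (h.adj_head hx).ne
  by_cases hvr : v = r
  · subst hvr
    refine ⟨.cons hadj.symm .nil, by simp [hrx], ?_, ?_⟩
    · simp [ew_of_mem (Sym2.eq_swap ▸ hxv : s(v, x) ∈ F)]
    · simp +contextual [hx]
  · obtain ⟨y, hy, hyx, hry, hyv⟩ := h.exists_detour hF ht hv hvr hxv
    have hadj_ry := h.adj_head hy
    have hadj_yv : G.Adj y v := hF.1 hyv
    refine ⟨.cons hadj_ry (.cons hadj_yv (.cons hadj.symm .nil)), ?_, ?_, ?_⟩
    · simp [hadj_ry.ne, hadj_yv.ne, hadj.ne.symm, hyx, Ne.symm hvr, hrx]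
    · simp [ew_of_notMem hry, ew_of_mem hyv, ew_of_mem (Sym2.eq_swap ▸ hxv : s(v, x) ∈ F)]
    · simp +contextual [hx, hy, hxv]

lemma exists_path_to_non_tooth (h : IsRake G T r B) (hF : IsJoin G T F)
    (ht : HasPrivateTeeth B F) {x : V} (hx : x ∉ B) :
    ∃ p : G.Walk r x, p.IsPath ∧ walkWeight F p = 0 := by
  by_cases hxr : x = r
  · subst hxr
    exact ⟨.nil, .nil, rfl⟩
  obtain ⟨b, hb, hxb⟩ := h.exists_adj hx
  by_cases hbx : s(b, x) ∈ F
  · obtain ⟨y, hy, -, hry, hyx⟩ := h.exists_detour hF ht hx hxr hbx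
    have hadj_ry := h.adj_head hy
    have hadj_yx : G.Adj y x := hF.1 hyx
    refine ⟨.cons hadj_ry (.cons hadj_yx .nil), ?_, ?_⟩
    · simp [hadj_ry.ne, hadj_yx.ne, Ne.symm hxr]
    · simp [ew_of_notMem hry, ew_of_mem hyx]
  · obtain ⟨p, hp, hpw, hsupp⟩ := h.exists_path_to_tooth hF ht hb
    refine ⟨p.concat hxb.symm, hp.concat (fun hxp => hbx (hsupp x hxp hx hxr)) hxb.symm, ?_⟩
    simp [hpw, ew_of_notMem hbx]

lemma distF_eq_neg_indicator (h : IsRake G T r B) (hF : IsJoin G T F) (ht : HasPrivateTeeth B F)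
    (x : V) : distF G F r x = -B.indicator 1 x := by
  refine distF_eq_of_forall_le ?_ fun p hp =>
    neg_indicator_le_walkWeight h.isIndepSet ht p hp.isTrail h.head_notMem
  by_cases hx : x ∈ B
  · obtain ⟨p, hp, hpw, -⟩ := h.exists_path_to_tooth hF ht hx
    exact ⟨p, hp, by simp [hpw, hx]⟩
  · obtain ⟨p, hp, hpw⟩ := h.exists_path_to_non_tooth hF ht hx
    exact ⟨p, hp, by simp [hpw, hx]⟩

end IsRake

end

theorem stmt_8_general (G : SimpleGraph V) (T : Set V) (r : V) (B : Set V)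
    (hrake : IsRake G T r B) :
    IsMinJoin G T {e ∈ G.edgeSet | ∃ b ∈ B, e = s(r, b)} ∧
    ConnectedEdgeSet {e ∈ G.edgeSet | ∃ b ∈ B, e = s(r, b)} ∧
    IsStrongComb G T r B := by
  have hmin := hrake.isMinJoin_spokes
  refine ⟨hmin, hrake.connectedEdgeSet_spokes, hrake.2.1, hrake.2.2.1, hrake.head_notMem,
    fun F hF => ?_⟩
  have ht : HasPrivateTeeth B F := hF.1.hasPrivateTeeth hrake.subset hrake.isIndepSet
    (hrake.ncard_spokes ▸ hF.2 _ hmin.1)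
  refine ⟨fun x hx => ?_, fun x hx => ?_⟩ <;>
    simp [hrake.distF_eq_neg_indicator hF.1 ht x, hx]

/-- if `(G, T)` is a rake with head `r` and tooth set `B`, then the set of
edges between `r` and `B` is a connected minimum join of `(G, T)`, and `(G, T)` is a
strong comb with respect to `r` with tooth set `B`. -/
theorem stmt_8 (G : SimpleGraph V) (T : Set V) (r : V) (B : Set V)
    (hG : IsGraft G T) (hrake : IsRake G T r B) :
    IsMinJoin G T {e ∈ G.edgeSet | ∃ b ∈ B, e = s(r, b)} ∧
    ConnectedEdgeSet {e ∈ G.edgeSet | ∃ b ∈ B, e = s(r, b)} ∧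
    IsStrongComb G T r B :=
  stmt_8_general G T r B hrake
end
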